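/- If the symmetric bilinear form B on V is nondegenerate, then the loop-space form Ω restricts to a perfect pairing between K₋ and K₊: (i) if f ∈ K₋ satisfies Ω(f, g) = 0 for all g ∈ K₊, then f = 0; and (ii) if g ∈ K₊ satisfies Ω(f, g) = 0 for all f ∈ K₋, then g = 0. (This identifies K with the cotangent bundle T*K₊ with K₋ playing the role of the fibers.) -/

import Mathlib

/-!
On pure tensors, `Ω(a ⊗ v, q^m ⊗ w) = (a_m - ã_{-m}) B(v, w)`, where `a_m` and `ã_m` are the
Laurent coefficients at `q = 0` of `a(q)` and `a(q⁻¹)`. For `f ∈ K₋` and `m ≥ 0` the second term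
vanishes, so pairing `f` with `q^m ⊗ w` reads off the coefficients of nonnegative index, while
those of negative index vanish by definition of `K₋`. Conversely, `a = q^j / (1 - q^N)` lies in
`K₋` for `0 ≤ j < N`, and `a_m - ã_{-m}` is the indicator of `j + Nℤ`; taking `N` larger than the
spread of the support of a Laurent polynomial `g`, pairing with `a ⊗ v` isolates a single
coefficient of `g`.
-/

open Polynomial in
theorem algebraMap_ratFunc_eq_aeval (F : Type*) [Field F] (p : F[X]) :
    algebraMap F[X] (RatFunc F) p = Polynomial.aeval RatFunc.X p := by
  have h : (IsScalarTower.toAlgHom F F[X] (RatFunc F)) = Polynomial.aeval (RatFunc.X (K := F)) :=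
    Polynomial.algHom_ext (by simp [RatFunc.algebraMap_X])
  exact DFunLike.congr_fun h p

open Polynomial in
/-- Injectivity of `aeval X⁻¹ : F[X] → F(q)`. -/
theorem aeval_inv_injective (F : Type*) [Field F] :
    Function.Injective (Polynomial.aeval (RatFunc.X (K := F))⁻¹ : F[X] →ₐ[F] RatFunc F) := by
  rw [injective_iff_map_eq_zero]
  intro p hp
  haveI : Invertible (RatFunc.X (K := F))⁻¹ :=
    invertibleOfNonzero (inv_ne_zero RatFunc.X_ne_zero)
  have h2 : (⅟(RatFunc.X (K := F))⁻¹) = RatFunc.X := by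
    rw [invOf_eq_inv, inv_inv]
  have hp' : Polynomial.eval₂ (algebraMap F (RatFunc F)) (RatFunc.X)⁻¹ p = 0 := by
    rwa [Polynomial.aeval_def] at hp
  rw [← Polynomial.eval₂_reverse_eq_zero_iff (algebraMap F (RatFunc F)) (RatFunc.X)⁻¹ p] at hp'
  rw [h2] at hp'
  have h3 : algebraMap F[X] (RatFunc F) p.reverse = 0 := by
    rw [algebraMap_ratFunc_eq_aeval, Polynomial.aeval_def]
    exact hp'
  have h4 : p.reverse = 0 := RatFunc.algebraMap_injective F (by simpa using h3)
  exact Polynomial.reverse_eq_zero.mp h4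

noncomputable section

open scoped TensorProduct

variable (F : Type*) [Field F]

/-- The automorphism `q ↦ q⁻¹` of `F(q)`: the unique `F`-algebra map sending `q` to `q⁻¹`. -/
def qinv : RatFunc F →ₐ[F] RatFunc F :=
  IsFractionRing.liftAlgHom (aeval_inv_injective F)

/-- Coefficient of `qⁿ` in the Laurent-series expansion at `q = 0`, as an `F`-linear map. -/
def coeffL (n : ℤ) : RatFunc F →ₗ[F] F where
  toFun h := ((h : LaurentSeries F)).coeff n
  map_add' a b := by
    rw [map_add, HahnSeries.coeff_add]
  map_smul' c a := by
    rw [RatFunc.smul_eq_C_mul, map_mul, ← RatFunc.algebraMap_eq_C,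
      IsScalarTower.algebraMap_apply F (Polynomial F) (RatFunc F),
      ← IsScalarTower.algebraMap_apply]
    simp

/-- `Res_{q=0} (h dq)`: the coefficient of `q⁻¹` in the Laurent expansion of `h` at `q = 0`. -/
def res0 (h : RatFunc F) : F := coeffL F (-1) h

/-- `Res_{q=∞} (h dq) := −Res_{q=0} (q⁻² h(q⁻¹) dq)`. -/
def resInf (h : RatFunc F) : F := - res0 F ((RatFunc.X)⁻¹ ^ 2 * qinv F h)

variable (V : Type*) [AddCommGroup V] [Module F V]

/-- The loop space `K := F(q) ⊗_F V` of `V`-valued rational functions. -/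
abbrev LoopK := RatFunc F ⊗[F] V

/-- `f(q) ↦ f(q⁻¹)` on `K`. -/
def finv : LoopK F V →ₗ[F] LoopK F V := LinearMap.rTensor V (qinv F).toLinearMap

/-- The `V`-valued coefficient of `qⁿ` in the expansion at `q = 0` of an element of `K`. -/
def vcoeff (n : ℤ) : LoopK F V →ₗ[F] V :=
  (TensorProduct.lid F V).toLinearMap ∘ₗ LinearMap.rTensor V (coeffL F n)

/-- The loop-space form
`Ω(f,g) = −Res_{q=0}(q⁻¹ B_q(f(q⁻¹),g(q)) dq) − Res_{q=∞}(q⁻¹ B_q(f(q⁻¹),g(q)) dq)`. -/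
def Omega (B : LinearMap.BilinForm F V) (f g : LoopK F V) : F :=
  - res0 F ((RatFunc.X)⁻¹ * (LinearMap.BilinForm.baseChange (RatFunc F) B) (finv F V f) g)
  - resInf F ((RatFunc.X)⁻¹ * (LinearMap.BilinForm.baseChange (RatFunc F) B) (finv F V f) g)

/-- `K₊`: `V`-valued Laurent polynomials in `q`. -/
def Kplus : Submodule F (LoopK F V) :=
  Submodule.span F {z : LoopK F V | ∃ (n : ℤ) (v : V), z = (RatFunc.X ^ n) ⊗ₜ[F] v}

/-- `K₋`: `V`-valued rational functions regular at `q = 0` and vanishing at `q = ∞`. -/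
def Kminus : Submodule F (LoopK F V) where
  carrier := {f | (∀ n : ℤ, n < 0 → vcoeff F V n f = 0) ∧
    (∀ n : ℤ, n ≤ 0 → vcoeff F V n (finv F V f) = 0)}
  add_mem' := by
    rintro a b ⟨ha1, ha2⟩ ⟨hb1, hb2⟩
    constructor
    · intro n hn; rw [map_add, ha1 n hn, hb1 n hn, add_zero]
    · intro n hn; rw [map_add, map_add, ha2 n hn, hb2 n hn, add_zero]
  zero_mem' := by
    constructor <;> intro n hn <;> simp
  smul_mem' := by
    rintro c a ⟨ha1, ha2⟩
    constructor
    · intro n hn; rw [map_smul, ha1 n hn, smul_zero]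
    · intro n hn; rw [map_smul, map_smul, ha2 n hn, smul_zero]

/-- The value at `q = 1` of a `V`-valued Laurent polynomial (the sum of its coefficients). -/
def evalOne (f : LoopK F V) : V := ∑ᶠ n : ℤ, vcoeff F V n f

/-- Scalar `K₊ ⊂ F(q)`: the Laurent polynomials. -/
def KplusS : Submodule F (RatFunc F) :=
  Submodule.span F (Set.range fun n : ℤ => (RatFunc.X : RatFunc F) ^ n)

/-- Scalar `K₋ ⊂ F(q)`: rational functions regular at `q = 0` and vanishing at `q = ∞`. -/
def KminusS : Submodule F (RatFunc F) where
  carrier := {h | (∀ n : ℤ, n < 0 → coeffL F n h = 0) ∧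
    (∀ n : ℤ, n ≤ 0 → coeffL F n (qinv F h) = 0)}
  add_mem' := by
    rintro a b ⟨ha1, ha2⟩ ⟨hb1, hb2⟩
    constructor
    · intro n hn; rw [map_add, ha1 n hn, hb1 n hn, add_zero]
    · intro n hn; rw [map_add, map_add, ha2 n hn, hb2 n hn, add_zero]
  zero_mem' := by
    constructor <;> intro n hn <;> simp
  smul_mem' := by
    rintro c a ⟨ha1, ha2⟩
    constructor
    · intro n hn; rw [map_smul, ha1 n hn, smul_zero]
    · intro n hn; rw [map_smul, map_smul, ha2 n hn, smul_zero]

section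

variable {F V}

open Polynomial in
theorem qinv_algebraMap (p : F[X]) :
    qinv F (algebraMap F[X] (RatFunc F) p) = aeval (RatFunc.X (K := F))⁻¹ p :=
  IsFractionRing.lift_algebraMap (aeval_inv_injective F) p

theorem qinv_X : qinv F RatFunc.X = RatFunc.X⁻¹ := by
  simpa using qinv_algebraMap Polynomial.X

theorem qinv_X_zpow (m : ℤ) : qinv F (RatFunc.X ^ m) = RatFunc.X ^ (-m) := by
  rw [map_zpow₀, qinv_X, inv_zpow, zpow_neg]

open Polynomial in
theorem qinv_qinv (h : RatFunc F) : qinv F (qinv F h) = h := by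
  suffices (qinv F).comp (qinv F) = AlgHom.id F (RatFunc F) from DFunLike.congr_fun this h
  refine IsLocalization.algHom_ext (nonZeroDivisors F[X]) (Polynomial.algHom_ext ?_)
  change qinv F (qinv F (algebraMap _ _ X)) = algebraMap _ _ X
  rw [RatFunc.algebraMap_X, qinv_X, map_inv₀, qinv_X, inv_inv]

theorem coeffL_apply (n : ℤ) (h : RatFunc F) : coeffL F n h = (h : LaurentSeries F).coeff n :=
  rfl

theorem coe_X_zpow (m : ℤ) :
    ((RatFunc.X ^ m : RatFunc F) : LaurentSeries F) = HahnSeries.single m 1 := by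
  rw [map_zpow₀, RatFunc.coe_X, ← RatFunc.single_zpow]

theorem coeffL_X_zpow_mul (k n : ℤ) (h : RatFunc F) :
    coeffL F n (RatFunc.X ^ k * h) = coeffL F (n - k) h := by
  rw [coeffL_apply, coeffL_apply, map_mul, coe_X_zpow, ← sub_add_cancel n k,
    HahnSeries.coeff_single_mul_add, one_mul, add_sub_cancel_right]

theorem eq_zero_of_coeffL_eq_zero {h : RatFunc F} (hh : ∀ n, coeffL F n h = 0) : h = 0 := by
  refine RingHom.injective _ (?_ : (h : LaurentSeries F) = ((0 : RatFunc F) : LaurentSeries F))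
  ext n
  simpa [coeffL_apply] using hh n

theorem res0_X_inv_mul (h : RatFunc F) : res0 F (RatFunc.X⁻¹ * h) = coeffL F 0 h := by
  rw [res0, ← zpow_neg_one, coeffL_X_zpow_mul, sub_neg_eq_add, neg_add_cancel]

theorem resInf_X_inv_mul (h : RatFunc F) :
    resInf F (RatFunc.X⁻¹ * h) = -coeffL F 0 (qinv F h) := by
  have hX : (RatFunc.X : RatFunc F) ≠ 0 := RatFunc.X_ne_zero
  rw [resInf, map_mul, map_inv₀, qinv_X, inv_inv, ← res0_X_inv_mul]
  congr 2
  field_simp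

theorem finv_tmul (a : RatFunc F) (v : V) : finv F V (a ⊗ₜ v) = qinv F a ⊗ₜ v :=
  rfl

theorem vcoeff_tmul (n : ℤ) (a : RatFunc F) (v : V) :
    vcoeff F V n (a ⊗ₜ v) = coeffL F n a • v := by
  simp [vcoeff]

theorem coeffL_basis_repr {ι : Type*} (b : Module.Basis ι F V) (n : ℤ) (f : LoopK F V)
    (i : ι) :
    coeffL F n ((Algebra.TensorProduct.basis (RatFunc F) b).repr f i) =
      b.repr (vcoeff F V n f) i := by
  induction f using TensorProduct.induction_on with
  | zero => simp
  | tmul a v =>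
    rw [Algebra.TensorProduct.basis_repr_tmul, Finsupp.smul_apply, Finsupp.mapRange_apply,
      smul_eq_mul, mul_comm, ← Algebra.smul_def, map_smul, vcoeff_tmul, map_smul,
      Finsupp.smul_apply, smul_eq_mul, smul_eq_mul, mul_comm]
  | add x y hx hy => simp [hx, hy]

theorem eq_zero_of_vcoeff_eq_zero {f : LoopK F V} (hf : ∀ n, vcoeff F V n f = 0) : f = 0 := by
  let bq := Algebra.TensorProduct.basis (RatFunc F) (Module.Basis.ofVectorSpace F V)
  refine bq.repr.map_eq_zero_iff.mp (Finsupp.ext fun i => eq_zero_of_coeffL_eq_zero fun n => ?_)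
  rw [coeffL_basis_repr, hf, map_zero, Finsupp.zero_apply]

variable (B : LinearMap.BilinForm F V)

theorem Omega_eq_coeffL (f g : LoopK F V) :
    Omega F V B f g =
      coeffL F 0 (qinv F (B.baseChange (RatFunc F) (finv F V f) g)) -
        coeffL F 0 (B.baseChange (RatFunc F) (finv F V f) g) := by
  rw [Omega, res0_X_inv_mul, resInf_X_inv_mul]
  ring

variable (F V) in
def omegaForm : LoopK F V →ₗ[F] LoopK F V →ₗ[F] F :=
  (((B.baseChange (RatFunc F)).restrictScalars₁₂ F F).compl₁₂ (finv F V) LinearMap.id).compr₂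
    (coeffL F 0 ∘ₗ (qinv F).toLinearMap - coeffL F 0)

theorem omegaForm_apply (f g : LoopK F V) : omegaForm F V B f g = Omega F V B f g := by
  rw [Omega_eq_coeffL]
  rfl

theorem Omega_tmul_X_zpow_tmul (a : RatFunc F) (v w : V) (m : ℤ) :
    Omega F V B (a ⊗ₜ v) ((RatFunc.X ^ m) ⊗ₜ w) =
      (coeffL F m a - coeffL F (-m) (qinv F a)) * B v w := by
  rw [Omega_eq_coeffL, finv_tmul, LinearMap.BilinForm.baseChange_tmul, map_smul, map_smul,
    map_smul, map_mul, qinv_qinv, qinv_X_zpow, mul_comm, coeffL_X_zpow_mul, mul_comm,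
    coeffL_X_zpow_mul, zero_sub, zero_sub, neg_neg, smul_eq_mul, smul_eq_mul, ← mul_sub,
    mul_comm]

theorem Omega_X_zpow_tmul (f : LoopK F V) (m : ℤ) (w : V) :
    Omega F V B f ((RatFunc.X ^ m) ⊗ₜ w) =
      B (vcoeff F V m f - vcoeff F V (-m) (finv F V f)) w := by
  rw [← omegaForm_apply]
  induction f using TensorProduct.induction_on with
  | zero => simp
  | tmul a v =>
    rw [omegaForm_apply, Omega_tmul_X_zpow_tmul, finv_tmul, vcoeff_tmul, vcoeff_tmul,
      ← sub_smul, LinearMap.map_smul₂, smul_eq_mul]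
  | add x y hx hy => simp only [map_add, LinearMap.add_apply, hx, hy, add_sub_add_comm]

theorem Omega_X_zpow_tmul_of_mem_Kminus {f : LoopK F V} (hf : f ∈ Kminus F V) {n : ℤ}
    (hn : 0 ≤ n) (w : V) :
    Omega F V B f ((RatFunc.X ^ n) ⊗ₜ w) = B (vcoeff F V n f) w := by
  rw [Omega_X_zpow_tmul, hf.2 (-n) (by omega), sub_zero]

variable (F V) in
def laurentPoly : (ℤ →₀ V) →ₗ[F] LoopK F V :=
  Finsupp.lsum F fun m => TensorProduct.mk F (RatFunc F) V (RatFunc.X ^ m)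

theorem Kplus_le_range_laurentPoly : Kplus F V ≤ LinearMap.range (laurentPoly F V) := by
  refine Submodule.span_le.mpr ?_
  rintro _ ⟨n, v, rfl⟩
  exact ⟨Finsupp.single n v, by simp [laurentPoly]⟩

theorem Omega_tmul_laurentPoly (a : RatFunc F) (v : V) (l : ℤ →₀ V) :
    Omega F V B (a ⊗ₜ v) (laurentPoly F V l) =
      l.sum fun m w => (coeffL F m a - coeffL F (-m) (qinv F a)) * B v w := by
  rw [← omegaForm_apply, laurentPoly, Finsupp.lsum_apply, map_finsuppSum]
  simp only [TensorProduct.mk_apply, omegaForm_apply, Omega_tmul_X_zpow_tmul]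

theorem coe_inv_one_sub_X_pow {N : ℕ} (hN : N ≠ 0) :
    (((1 - RatFunc.X ^ N)⁻¹ : RatFunc F) : LaurentSeries F) =
      (PowerSeries.expand N hN (PowerSeries.mk 1) : PowerSeries F) := by
  have hinv : PowerSeries.expand N hN (PowerSeries.mk 1) * (1 - PowerSeries.X ^ N) =
      (1 : PowerSeries F) := by
    rw [← PowerSeries.expand_X N hN, ← map_one (PowerSeries.expand N hN), ← map_sub, ← map_mul,
      PowerSeries.mk_one_mul_one_sub_eq_one, map_one]
  rw [map_inv₀]
  refine inv_eq_of_mul_eq_one_left ?_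
  rw [← PowerSeries.coe_one, ← hinv, PowerSeries.coe_mul]
  simp

theorem coeffL_inv_one_sub_X_pow {N : ℕ} (hN : N ≠ 0) (n : ℤ) :
    coeffL F n (1 - RatFunc.X ^ N)⁻¹ = if 0 ≤ n ∧ (N : ℤ) ∣ n then 1 else 0 := by
  rw [coeffL_apply, coe_inv_one_sub_X_pow hN, PowerSeries.coeff_coe, PowerSeries.coeff_expand]
  rcases lt_or_ge n 0 with hn | hn
  · simp [hn, not_le.mpr hn]
  · simp [not_lt.mpr hn, hn, Int.natCast_dvd]

theorem qinv_inv_one_sub_X_pow {N : ℕ} (hN : N ≠ 0) :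
    qinv F (1 - RatFunc.X ^ N)⁻¹ = -(RatFunc.X ^ (N : ℤ) * (1 - RatFunc.X ^ N)⁻¹) := by
  have hX : (RatFunc.X : RatFunc F) ≠ 0 := RatFunc.X_ne_zero
  have hX1 : (1 - RatFunc.X ^ N : RatFunc F) ≠ 0 := by
    intro h
    simpa [h] using coeffL_inv_one_sub_X_pow (F := F) hN 0
  rw [map_inv₀, map_sub, map_one, map_pow, qinv_X, zpow_natCast, ← neg_mul, inv_pow]
  refine (eq_inv_of_mul_eq_one_left ?_).symm
  field_simp
  ring

variable (F) in
def diracComb (N : ℕ) (j : ℤ) : RatFunc F := RatFunc.X ^ j * (1 - RatFunc.X ^ N)⁻¹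

theorem coeffL_diracComb {N : ℕ} (hN : N ≠ 0) (j n : ℤ) :
    coeffL F n (diracComb F N j) = if 0 ≤ n - j ∧ (N : ℤ) ∣ n - j then 1 else 0 := by
  rw [diracComb, coeffL_X_zpow_mul, coeffL_inv_one_sub_X_pow hN]

theorem coeffL_qinv_diracComb {N : ℕ} (hN : N ≠ 0) (j n : ℤ) :
    coeffL F n (qinv F (diracComb F N j)) =
      -if 0 ≤ n + j - N ∧ (N : ℤ) ∣ n + j - N then 1 else 0 := by
  rw [diracComb, map_mul, qinv_X_zpow, qinv_inv_one_sub_X_pow hN, mul_neg, map_neg,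
    coeffL_X_zpow_mul, coeffL_X_zpow_mul, coeffL_inv_one_sub_X_pow hN, sub_neg_eq_add]

theorem diracComb_mem_KminusS {N : ℕ} (hN : N ≠ 0) {j : ℤ} (hj0 : 0 ≤ j) (hjN : j < N) :
    diracComb F N j ∈ KminusS F := by
  refine ⟨fun n hn => ?_, fun n hn => ?_⟩
  · rw [coeffL_diracComb hN, if_neg (by omega)]
  · rw [coeffL_qinv_diracComb hN, if_neg (by omega), neg_zero]

theorem coeffL_sub_coeffL_qinv_diracComb {N : ℕ} (hN : N ≠ 0) (j m : ℤ) :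
    coeffL F m (diracComb F N j) - coeffL F (-m) (qinv F (diracComb F N j)) =
      if (N : ℤ) ∣ m - j then 1 else 0 := by
  have hN' : (0 : ℤ) < N := by omega
  rw [coeffL_diracComb hN, coeffL_qinv_diracComb hN, sub_neg_eq_add]
  by_cases hk : (N : ℤ) ∣ m - j
  · obtain ⟨t, ht⟩ := hk
    rw [ht, show -m + j - N = N * (-t - 1) by linarith]
    simp only [mul_nonneg_iff_of_pos_left hN', dvd_mul_right, and_true, if_true]
    rcases le_or_gt 0 t with ht0 | ht0
    · rw [if_pos ht0, if_neg (by omega), add_zero]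
    · rw [if_neg (by omega), if_pos (by omega), zero_add]
  · have hk' : ¬ (N : ℤ) ∣ -m + j - N := fun h => hk (by
      rw [show m - j = -(-m + j - N + N) by ring, dvd_neg]
      exact dvd_add h dvd_rfl)
    simp [hk, hk']

theorem tmul_mem_Kminus {a : RatFunc F} (ha : a ∈ KminusS F) (v : V) : a ⊗ₜ v ∈ Kminus F V :=
  ⟨fun n hn => by rw [vcoeff_tmul, ha.1 n hn, zero_smul],
    fun n hn => by rw [finv_tmul, vcoeff_tmul, ha.2 n hn, zero_smul]⟩

theorem exists_dvd_sub_iff_eq (S : Finset ℤ) (n : ℤ) :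
    ∃ N : ℕ, ∃ j : ℤ, N ≠ 0 ∧ 0 ≤ j ∧ j < N ∧ ∀ m ∈ S, (N : ℤ) ∣ m - j ↔ m = n := by
  set N := S.sup (fun m => (m - n).natAbs) + 1
  have hN : (0 : ℤ) < N := by omega
  refine ⟨N, n % N, by omega, Int.emod_nonneg n hN.ne', Int.emod_lt_of_pos n hN,
    fun m hm => ?_⟩
  have hsplit : m - n % N = m - n + N * (n / N) := by
    linarith [Int.mul_ediv_add_emod n N]
  have hlt : (m - n).natAbs < (N : ℤ).natAbs := by
    have := Finset.le_sup (f := fun m => (m - n).natAbs) hm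
    omega
  rw [hsplit, dvd_add_left (dvd_mul_right _ _)]
  exact ⟨fun h => sub_eq_zero.mp (Int.eq_zero_of_dvd_of_natAbs_lt_natAbs h hlt),
    fun h => by simp [h]⟩

theorem exists_mem_Kminus_Omega_laurentPoly_eq (l : ℤ →₀ V) (n : ℤ) (v : V) :
    ∃ f ∈ Kminus F V, Omega F V B f (laurentPoly F V l) = B v (l n) := by
  obtain ⟨N, j, hN, hj0, hjN, hS⟩ := exists_dvd_sub_iff_eq l.support n
  refine ⟨diracComb F N j ⊗ₜ v, tmul_mem_Kminus (diracComb_mem_KminusS hN hj0 hjN) v, ?_⟩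
  rw [Omega_tmul_laurentPoly, Finsupp.sum]
  simp only [coeffL_sub_coeffL_qinv_diracComb hN, ite_mul, one_mul, zero_mul]
  rw [Finset.sum_congr rfl fun m hm => if_congr (hS m hm) rfl rfl, Finset.sum_ite_eq']
  split_ifs with hn
  · rfl
  · rw [Finsupp.notMem_support_iff.mp hn, map_zero]

end

theorem Omega_perfect_pairing (B : LinearMap.BilinForm F V)
    (hB : ∀ u v : V, B u v = B v u)
    (hnd : ∀ v : V, (∀ w : V, B v w = 0) → v = 0) :
    (∀ f ∈ Kminus F V, (∀ g ∈ Kplus F V, Omega F V B f g = 0) → f = 0) ∧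
    (∀ g ∈ Kplus F V, (∀ f ∈ Kminus F V, Omega F V B f g = 0) → g = 0) := by
  refine ⟨fun f hf hpair => eq_zero_of_vcoeff_eq_zero fun n => ?_, fun g hg hpair => ?_⟩
  · rcases lt_or_ge n 0 with hn | hn
    · exact hf.1 n hn
    refine hnd _ fun w => ?_
    rw [← Omega_X_zpow_tmul_of_mem_Kminus B hf hn]
    exact hpair _ (Submodule.subset_span ⟨n, w, rfl⟩)
  · obtain ⟨l, rfl⟩ := Kplus_le_range_laurentPoly hg
    suffices l = 0 by rw [this, map_zero]
    ext n
    refine hnd _ fun v => ?_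
    obtain ⟨f, hf, hfl⟩ := exists_mem_Kminus_Omega_laurentPoly_eq B l n v
    rw [hB, ← hfl, hpair f hf]

end
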